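/- Let φ ∈ K(z) be a rational function with simple good reduction outside S, and let P ∈ P^1(K) be a periodic point for φ with minimal period n. Then for every place p ∉ S and all i, j, m ∈ ℕ, one has δ_p(φ^i(P), φ^j(P)) = δ_p(φ^{i+m}(P), φ^{j+m}(P)). -/

import Mathlib

open Polynomial

noncomputable section

open scoped Classical

/-- The places of the rational function field `k(t)`: the finite place attached to `t - α`
for `α ∈ k`, together with the place at infinity. -/
inductive Place (k : Type*) : Type _ where
  | finite (α : k) : Place k
  | infinity : Place k

variable {k : Type*} [Field k]

/-- The normalized additive valuation `v_p : k(t) → ℤ` attached to a place `p`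
(with junk value `0` at `x = 0`). -/
def placeVal : Place k → RatFunc k → ℤ
  | Place.finite α, x =>
      (Polynomial.rootMultiplicity α (RatFunc.num x) : ℤ)
        - (Polynomial.rootMultiplicity α (RatFunc.denom x) : ℤ)
  | Place.infinity, x => - RatFunc.intDegree x

/-- The valuation with value `⊤` at `0`. -/
def placeValT (p : Place k) (x : RatFunc k) : WithTop ℤ :=
  if x = 0 then ⊤ else (placeVal p x : WithTop ℤ)

/-- The ring of S-integers `R_S`. -/
def SInt (S : Finset (Place k)) : Set (RatFunc k) :=
  {x | ∀ p ∉ S, 0 ≤ placeValT p x}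

/-- The group of S-units `R_S*`. -/
def SUnit (S : Finset (Place k)) : Set (RatFunc k) :=
  {x | ∀ p ∉ S, placeValT p x = 0}

/-- Canonical homogeneous coordinates on `P^1(F) = F ∪ {∞}`. -/
def coords {F : Type*} [Field F] : Option F → F × F
  | none => (1, 0)
  | some x => (x, 1)

/-- The `p`-adic logarithmic distance between two points of `P^1(k(t))`. -/
def logDist (p : Place k) (P Q : Option (RatFunc k)) : WithTop ℤ :=
  placeValT p ((coords P).1 * (coords Q).2 - (coords Q).1 * (coords P).2)
    + (((- min (placeVal p (coords P).1) (placeVal p (coords P).2))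
        - min (placeVal p (coords Q).1) (placeVal p (coords Q).2) : ℤ) : WithTop ℤ)

/-- The self-map of `P^1(F) = F ∪ {∞}` induced by the rational function `f/g` of degree `d`;
in homogeneous coordinates `[x : y]` is sent to `[F*(x,y) : G*(x,y)]` where `F*`, `G*` are the
degree-`d` homogenizations of `f` and `g`. -/
def ratApply {F : Type*} [Field F] (f g : Polynomial F) (d : ℕ) :
    Option F → Option F
  | none =>
      if Polynomial.coeff g d = 0 then none
      else some (Polynomial.coeff f d / Polynomial.coeff g d)
  | some x =>
      if Polynomial.eval x g = 0 then none
      else some (Polynomial.eval x f / Polynomial.eval x g)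

/-- The Möbius transformation of `P^1(F)` attached to a `2 × 2` matrix. -/
def moebius {F : Type*} [Field F] (M : Matrix (Fin 2) (Fin 2) F) :
    Option F → Option F
  | none => if M 1 0 = 0 then none else some (M 0 0 / M 1 0)
  | some x =>
      if M 1 0 * x + M 1 1 = 0 then none
      else some ((M 0 0 * x + M 0 1) / (M 1 0 * x + M 1 1))

/-- `φ` is isotrivial over `K = k(t)` if some conjugate `A ∘ φ ∘ A⁻¹` by an element
`A ∈ PGL_2(K)` is given by a rational function all of whose coefficients lie in `k`. -/
def IsIsotrivial (φ : Option (RatFunc k) → Option (RatFunc k)) : Prop :=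
  ∃ M : Matrix (Fin 2) (Fin 2) (RatFunc k), M.det ≠ 0 ∧
    ∃ F G : Polynomial k, IsCoprime F G ∧
      moebius M ∘ φ ∘ moebius M⁻¹ =
        ratApply (F.map (RatFunc.C : k →+* RatFunc k))
          (G.map (RatFunc.C : k →+* RatFunc k)) (max F.natDegree G.natDegree)

/-- The homogeneous resultant of the degree-`d` homogenizations of `f` and `g`, as the
determinant of the `2d × 2d` Sylvester matrix. -/
def hResultant {F : Type*} [Field F] (d : ℕ) (f g : Polynomial F) : F :=
  Matrix.det (Matrix.of fun i j : Fin (d + d) =>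
    if (i : ℕ) < d then
      (if (i : ℕ) ≤ (j : ℕ) ∧ (j : ℕ) ≤ (i : ℕ) + d then f.coeff (d + (i : ℕ) - (j : ℕ)) else 0)
    else
      (if (i : ℕ) - d ≤ (j : ℕ) ∧ (j : ℕ) ≤ (i : ℕ) then g.coeff ((i : ℕ) - (j : ℕ)) else 0))

/-- `(f, g)` is an S-reduced integral pair: all coefficients are S-integers and they have no
common non-unit factor in `R_S`. -/
def SReducedPair (S : Finset (Place k)) (f g : Polynomial (RatFunc k)) : Prop :=
  (∀ n, f.coeff n ∈ SInt S) ∧ (∀ n, g.coeff n ∈ SInt S) ∧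
    ∀ r : RatFunc k, r ≠ 0 → r ∈ SInt S →
      (∀ n, f.coeff n / r ∈ SInt S) → (∀ n, g.coeff n / r ∈ SInt S) → r ∈ SUnit S

/-- `φ = f/g` (of degree `d`) has simple good reduction at the place `p ∉ S`: written in
S-reduced integral form, the homogeneous resultant has `v_p` equal to `0`. -/
def HasSimpleGoodReductionAt (S : Finset (Place k)) (p : Place k)
    (f g : Polynomial (RatFunc k)) (d : ℕ) : Prop :=
  ∃ c : RatFunc k, c ≠ 0 ∧ SReducedPair S (Polynomial.C c * f) (Polynomial.C c * g) ∧
    placeValT p (hResultant d (Polynomial.C c * f) (Polynomial.C c * g)) = 0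

/-- `φ = f/g` (of degree `d`) has simple good reduction outside `S`: written in S-reduced
integral form, the homogeneous resultant is an S-unit. -/
def HasSimpleGoodReductionOutside (S : Finset (Place k))
    (f g : Polynomial (RatFunc k)) (d : ℕ) : Prop :=
  ∃ c : RatFunc k, c ≠ 0 ∧ SReducedPair S (Polynomial.C c * f) (Polynomial.C c * g) ∧
    hResultant d (Polynomial.C c * f) (Polynomial.C c * g) ∈ SUnit S

/-- `φ` has good reduction at `p` if some conjugate of `φ` by an element of `PGL_2(K)`
has simple good reduction at `p`. -/
def HasGoodReductionAt (S : Finset (Place k)) (p : Place k)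
    (φ : Option (RatFunc k) → Option (RatFunc k)) (d : ℕ) : Prop :=
  ∃ M : Matrix (Fin 2) (Fin 2) (RatFunc k), M.det ≠ 0 ∧
    ∃ F G : Polynomial (RatFunc k), IsCoprime F G ∧ max F.natDegree G.natDegree = d ∧
      moebius M ∘ φ ∘ moebius M⁻¹ = ratApply F G d ∧
      HasSimpleGoodReductionAt S p F G d

/-- `φ` has good reduction outside `S` if it has good reduction at every place `p ∉ S`. -/
def HasGoodReductionOutside (S : Finset (Place k))
    (φ : Option (RatFunc k) → Option (RatFunc k)) (d : ℕ) : Prop :=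
  ∀ p ∉ S, HasGoodReductionAt S p φ d

/-- The quantity `b(d,s) = ((9^(s-1)+1)/2)(2d+1) + 2`. -/
def bnd (d s : ℕ) : ℕ := (9 ^ (s - 1) + 1) / 2 * (2 * d + 1) + 2

/-- The bound `C(d,s)` of Theorem 2: the product over primes `p ≤ b(d,s)` of
`max{b(d,s), p·3^(2s-1)}`. -/
def periodBound (d s : ℕ) : ℕ :=
  ∏ p ∈ Finset.filter Nat.Prime (Finset.range (bnd d s + 1)),
    max (bnd d s) (p * 3 ^ (2 * s - 1))

end

section ValLemmas

variable {k : Type*} [Field k]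

lemma placeVal_zero (p : Place k) : placeVal p (0 : RatFunc k) = 0 := by
  cases p <;> simp [placeVal]

lemma placeVal_one (p : Place k) : placeVal p (1 : RatFunc k) = 0 := by
  cases p with
  | infinity => simp [placeVal]
  | finite α =>
      simp [placeVal, Polynomial.rootMultiplicity_eq_zero (by simp [Polynomial.IsRoot] :
        ¬ (1 : Polynomial k).IsRoot α)]

lemma placeVal_div_algebraMap (α : k) {a b : Polynomial k} (ha : a ≠ 0) (hb : b ≠ 0) :
    placeVal (Place.finite α)
        ((algebraMap (Polynomial k) (RatFunc k)) a / (algebraMap (Polynomial k) (RatFunc k)) b)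
      = (Polynomial.rootMultiplicity α a : ℤ) - Polynomial.rootMultiplicity α b := by
  set x : RatFunc k := (algebraMap (Polynomial k) (RatFunc k)) a /
      (algebraMap (Polynomial k) (RatFunc k)) b with hx
  have hx0 : x ≠ 0 := div_ne_zero (RatFunc.algebraMap_ne_zero ha) (RatFunc.algebraMap_ne_zero hb)
  have h1 : (algebraMap (Polynomial k) (RatFunc k)) x.num /
      (algebraMap (Polynomial k) (RatFunc k)) x.denom = x := RatFunc.num_div_denom x
  rw [hx] at h1
  rw [div_eq_div_iff (RatFunc.algebraMap_ne_zero (RatFunc.denom_ne_zero x))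
      (RatFunc.algebraMap_ne_zero hb)] at h1
  have h2 : (algebraMap (Polynomial k) (RatFunc k)) (x.num * b)
      = (algebraMap (Polynomial k) (RatFunc k)) (a * x.denom) := by
    rw [map_mul, map_mul]; exact h1
  have h3 : x.num * b = a * x.denom := RatFunc.algebraMap_injective k h2
  have hnum : x.num ≠ 0 := RatFunc.num_ne_zero hx0
  have h4 : Polynomial.rootMultiplicity α a + Polynomial.rootMultiplicity α x.denom
      = Polynomial.rootMultiplicity α x.num + Polynomial.rootMultiplicity α b := by
    rw [← Polynomial.rootMultiplicity_mul (mul_ne_zero ha (RatFunc.denom_ne_zero x)),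
      ← Polynomial.rootMultiplicity_mul (mul_ne_zero hnum hb), ← h3]
  show (Polynomial.rootMultiplicity α x.num : ℤ) - Polynomial.rootMultiplicity α x.denom = _
  omega

lemma placeVal_mul (p : Place k) {x y : RatFunc k} (hx : x ≠ 0) (hy : y ≠ 0) :
    placeVal p (x * y) = placeVal p x + placeVal p y := by
  cases p with
  | infinity =>
      show -(x*y).intDegree = -x.intDegree + -y.intDegree
      rw [RatFunc.intDegree_mul hx hy]; ring
  | finite α =>
      have hxy : x * y = (algebraMap (Polynomial k) (RatFunc k)) (x.num * y.num) /
          (algebraMap (Polynomial k) (RatFunc k)) (x.denom * y.denom) := by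
        rw [map_mul, map_mul, ← div_mul_div_comm, RatFunc.num_div_denom, RatFunc.num_div_denom]
      rw [hxy, placeVal_div_algebraMap α (mul_ne_zero (RatFunc.num_ne_zero hx)
        (RatFunc.num_ne_zero hy)) (mul_ne_zero (RatFunc.denom_ne_zero x) (RatFunc.denom_ne_zero y)),
        Polynomial.rootMultiplicity_mul (mul_ne_zero (RatFunc.num_ne_zero hx) (RatFunc.num_ne_zero hy)),
        Polynomial.rootMultiplicity_mul (mul_ne_zero (RatFunc.denom_ne_zero x) (RatFunc.denom_ne_zero y))]
      show _ = ((Polynomial.rootMultiplicity α x.num : ℤ) - Polynomial.rootMultiplicity α x.denom)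
        + ((Polynomial.rootMultiplicity α y.num : ℤ) - Polynomial.rootMultiplicity α y.denom)
      push_cast
      ring

lemma placeVal_inv (p : Place k) {x : RatFunc k} (hx : x ≠ 0) :
    placeVal p x⁻¹ = - placeVal p x := by
  have := placeVal_mul p hx (inv_ne_zero hx)
  rw [mul_inv_cancel₀ hx, placeVal_one] at this
  omega

lemma placeVal_pow (p : Place k) {x : RatFunc k} (hx : x ≠ 0) (n : ℕ) :
    placeVal p (x ^ n) = n * placeVal p x := by
  induction n with
  | zero => simpa using placeVal_one p
  | succ n ih =>
      rw [pow_succ, placeVal_mul p (pow_ne_zero n hx) hx, ih]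
      push_cast; ring

lemma rootMultiplicity_min_le {α : k} {A B : Polynomial k} (hA : A ≠ 0) (hB : B ≠ 0)
    (hAB : A + B ≠ 0) : min (Polynomial.rootMultiplicity α A) (Polynomial.rootMultiplicity α B)
      ≤ Polynomial.rootMultiplicity α (A + B) := by
  rw [Polynomial.le_rootMultiplicity_iff hAB]
  have hdA : (Polynomial.X - Polynomial.C α) ^ min (Polynomial.rootMultiplicity α A)
      (Polynomial.rootMultiplicity α B) ∣ A :=
    dvd_trans (pow_dvd_pow _ (min_le_left _ _)) (Polynomial.pow_rootMultiplicity_dvd A α)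
  have hdB : (Polynomial.X - Polynomial.C α) ^ min (Polynomial.rootMultiplicity α A)
      (Polynomial.rootMultiplicity α B) ∣ B :=
    dvd_trans (pow_dvd_pow _ (min_le_right _ _)) (Polynomial.pow_rootMultiplicity_dvd B α)
  exact dvd_add hdA hdB

lemma placeVal_add (p : Place k) {x y : RatFunc k} (hx : x ≠ 0) (hy : y ≠ 0)
    (hxy : x + y ≠ 0) :
    min (placeVal p x) (placeVal p y) ≤ placeVal p (x + y) := by
  cases p with
  | infinity =>
      show min (-x.intDegree) (-y.intDegree) ≤ -(x+y).intDegree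
      have := RatFunc.intDegree_add_le hy hxy
      omega
  | finite α =>
      have hx' : x = (algebraMap (Polynomial k) (RatFunc k)) x.num /
          (algebraMap (Polynomial k) (RatFunc k)) x.denom := (RatFunc.num_div_denom x).symm
      have hy' : y = (algebraMap (Polynomial k) (RatFunc k)) y.num /
          (algebraMap (Polynomial k) (RatFunc k)) y.denom := (RatFunc.num_div_denom y).symm
      have hsum : x + y = (algebraMap (Polynomial k) (RatFunc k)) (x.num * y.denom + x.denom * y.num) /
          (algebraMap (Polynomial k) (RatFunc k)) (x.denom * y.denom) := by
        rw [map_add, map_mul, map_mul, map_mul]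
        conv_lhs => rw [hx', hy']
        rw [div_add_div _ _ (RatFunc.algebraMap_ne_zero (RatFunc.denom_ne_zero x))
          (RatFunc.algebraMap_ne_zero (RatFunc.denom_ne_zero y))]
      have hN : x.num * y.denom + x.denom * y.num ≠ 0 := by
        intro h0
        rw [hsum, h0, map_zero, zero_div] at hxy
        exact hxy rfl
      have hA : x.num * y.denom ≠ 0 := mul_ne_zero (RatFunc.num_ne_zero hx) (RatFunc.denom_ne_zero y)
      have hB : x.denom * y.num ≠ 0 := mul_ne_zero (RatFunc.denom_ne_zero x) (RatFunc.num_ne_zero hy)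
      rw [hsum, placeVal_div_algebraMap α hN (mul_ne_zero (RatFunc.denom_ne_zero x)
        (RatFunc.denom_ne_zero y))]
      have hmin := rootMultiplicity_min_le (α := α) hA hB hN
      rw [Polynomial.rootMultiplicity_mul hA, Polynomial.rootMultiplicity_mul hB] at hmin
      rw [Polynomial.rootMultiplicity_mul (mul_ne_zero (RatFunc.denom_ne_zero x)
        (RatFunc.denom_ne_zero y))]
      show min ((Polynomial.rootMultiplicity α x.num : ℤ) - Polynomial.rootMultiplicity α x.denom)
          ((Polynomial.rootMultiplicity α y.num : ℤ) - Polynomial.rootMultiplicity α y.denom) ≤ _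
      omega

end ValLemmas
section CoreLemmas

variable {k : Type*} [Field k]

lemma placeValT_mul (p : Place k) (x y : RatFunc k) :
    placeValT p (x * y) = placeValT p x + placeValT p y := by
  by_cases hx : x = 0
  · simp [placeValT, hx]
  by_cases hy : y = 0
  · simp [placeValT, hy]
  rw [placeValT, placeValT, placeValT, if_neg (mul_ne_zero hx hy), if_neg hx, if_neg hy,
    placeVal_mul p hx hy, WithTop.coe_add]

lemma placeVal_neg (p : Place k) (x : RatFunc k) : placeVal p (-x) = placeVal p x := by
  by_cases hx : x = 0
  · simp [hx]
  have hm1 : placeVal p (-1 : RatFunc k) = 0 := by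
    have h := placeVal_mul p (x := (-1 : RatFunc k)) (y := -1) (by norm_num) (by norm_num)
    rw [show ((-1 : RatFunc k) * -1) = 1 by ring, placeVal_one] at h
    omega
  rw [show -x = -1 * x by ring, placeVal_mul p (by norm_num) hx, hm1, zero_add]

/-- The valuation ring at `p`. -/
def ORing (p : Place k) : Subring (RatFunc k) where
  carrier := {x | x = 0 ∨ 0 ≤ placeVal p x}
  zero_mem' := Or.inl rfl
  one_mem' := Or.inr (le_of_eq (placeVal_one p).symm)
  add_mem' := by
    intro a b ha hb
    by_cases ha0 : a = 0
    · simpa [ha0] using hb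
    by_cases hb0 : b = 0
    · simpa [hb0] using ha
    rcases ha with rfl | ha; · exact absurd rfl ha0
    rcases hb with rfl | hb; · exact absurd rfl hb0
    by_cases hab : a + b = 0
    · exact Or.inl hab
    exact Or.inr (le_trans (le_min ha hb) (placeVal_add p ha0 hb0 hab))
  mul_mem' := by
    intro a b ha hb
    by_cases ha0 : a = 0
    · exact Or.inl (by simp [ha0])
    by_cases hb0 : b = 0
    · exact Or.inl (by simp [hb0])
    rcases ha with rfl | ha; · exact absurd rfl ha0
    rcases hb with rfl | hb; · exact absurd rfl hb0
    exact Or.inr (by rw [placeVal_mul p ha0 hb0]; positivity)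
  neg_mem' := by
    intro a ha
    rcases ha with rfl | ha
    · exact Or.inl (by simp)
    exact Or.inr (by rw [placeVal_neg]; exact ha)

lemma mem_ORing {p : Place k} {x : RatFunc k} :
    x ∈ ORing p ↔ x = 0 ∨ 0 ≤ placeVal p x := Iff.rfl

/-- Membership in the maximal ideal of the valuation ring. -/
def InMax (p : Place k) (x : RatFunc k) : Prop := x = 0 ∨ 1 ≤ placeVal p x

lemma InMax.add {p : Place k} {x y : RatFunc k} (hx : InMax p x) (hy : InMax p y) :
    InMax p (x + y) := by
  by_cases hx0 : x = 0
  · simpa [hx0] using hy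
  by_cases hy0 : y = 0
  · simpa [hy0] using hx
  rcases hx with rfl | hx; · exact absurd rfl hx0
  rcases hy with rfl | hy; · exact absurd rfl hy0
  by_cases hxy : x + y = 0
  · exact Or.inl hxy
  exact Or.inr (le_trans (le_min hx hy) (placeVal_add p hx0 hy0 hxy))

lemma InMax.o_mul {p : Place k} {a x : RatFunc k} (ha : a ∈ ORing p) (hx : InMax p x) :
    InMax p (a * x) := by
  by_cases ha0 : a = 0
  · exact Or.inl (by simp [ha0])
  by_cases hx0 : x = 0
  · exact Or.inl (by simp [hx0])
  rcases ha with rfl | ha; · exact absurd rfl ha0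
  rcases hx with rfl | hx; · exact absurd rfl hx0
  exact Or.inr (by rw [placeVal_mul p ha0 hx0]; omega)

end CoreLemmas

section HEval

variable {R : Type*} [CommRing R]

/-- Homogeneous evaluation of a coefficient sequence. -/
def hEval (d : ℕ) (a : ℕ → R) (X Y : R) : R :=
  ∑ m ∈ Finset.range (d + 1), a m * X ^ m * Y ^ (d - m)

lemma hEval_dvd (d : ℕ) (a b : ℕ → R) (x1 y1 x2 y2 : R) :
    (x1 * y2 - x2 * y1) ∣
      (hEval d a x1 y1 * hEval d b x2 y2 - hEval d a x2 y2 * hEval d b x1 y1) := by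
  set P : ℕ → ℕ → R := fun m l => x1 ^ m * y1 ^ (d - m) * x2 ^ l * y2 ^ (d - l) with hP
  have key : ∀ m l : ℕ, m ≤ d → l ≤ d → (x1 * y2 - x2 * y1) ∣ P m l - P l m := by
    have half : ∀ m l : ℕ, m ≤ l → l ≤ d → (x1 * y2 - x2 * y1) ∣ P m l - P l m := by
      intro m l hml hld
      obtain ⟨r, rfl⟩ : ∃ r, l = m + r := ⟨l - m, by omega⟩
      obtain ⟨s, rfl⟩ : ∃ s, d = m + r + s := ⟨d - (m + r), by omega⟩
      have hid : P m (m + r) - P (m + r) m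
          = (x1 ^ m * x2 ^ m * y1 ^ s * y2 ^ s) * ((x2 * y1) ^ r - (x1 * y2) ^ r) := by
        simp only [hP]
        rw [show m + r + s - m = r + s by omega, show m + r + s - (m + r) = s by omega]
        ring
      rw [hid]
      have h1 : (x1 * y2 - x2 * y1) ∣ ((x2 * y1) ^ r - (x1 * y2) ^ r) := by
        have := sub_dvd_pow_sub_pow (x2 * y1) (x1 * y2) r
        rw [show x2 * y1 - x1 * y2 = -(x1 * y2 - x2 * y1) by ring, neg_dvd] at this
        exact this
      exact Dvd.dvd.mul_left h1 _
    intro m l hm hl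
    rcases le_total m l with h | h
    · exact half m l h hl
    · have := half l m h hm
      rw [show P l m - P m l = -(P m l - P l m) by ring, dvd_neg] at this
      exact this
  have expand1 : hEval d a x1 y1 * hEval d b x2 y2
      = ∑ m ∈ Finset.range (d + 1), ∑ l ∈ Finset.range (d + 1), a m * b l * P m l := by
    rw [hEval, hEval, Finset.sum_mul_sum]
    refine Finset.sum_congr rfl fun m _ => Finset.sum_congr rfl fun l _ => ?_
    simp only [hP]; ring
  have expand2 : hEval d a x2 y2 * hEval d b x1 y1
      = ∑ m ∈ Finset.range (d + 1), ∑ l ∈ Finset.range (d + 1), a m * b l * P l m := by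
    rw [hEval, hEval, Finset.sum_mul_sum]
    refine Finset.sum_congr rfl fun m _ => Finset.sum_congr rfl fun l _ => ?_
    simp only [hP]; ring
  rw [expand1, expand2, ← Finset.sum_sub_distrib]
  refine Finset.dvd_sum fun m hm => ?_
  rw [← Finset.sum_sub_distrib]
  refine Finset.dvd_sum fun l hl => ?_
  rw [← mul_sub]
  exact Dvd.dvd.mul_left (key m l (by simpa using Nat.lt_succ_iff.mp (Finset.mem_range.mp hm))
    (by simpa using Nat.lt_succ_iff.mp (Finset.mem_range.mp hl))) _

end HEval
section Sylvester

variable {R : Type*} [CommRing R]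

/-- The Sylvester matrix of two coefficient sequences. -/
def sylMatrix (d : ℕ) (a b : ℕ → R) : Matrix (Fin (d + d)) (Fin (d + d)) R :=
  Matrix.of fun i j : Fin (d + d) =>
    if (i : ℕ) < d then
      (if (i : ℕ) ≤ (j : ℕ) ∧ (j : ℕ) ≤ (i : ℕ) + d then a (d + (i : ℕ) - (j : ℕ)) else 0)
    else
      (if (i : ℕ) - d ≤ (j : ℕ) ∧ (j : ℕ) ≤ (i : ℕ) then b ((i : ℕ) - (j : ℕ)) else 0)

lemma sylMatrix_mulVec (d : ℕ) (a b : ℕ → R) (X Y : R) (i : Fin (d + d)) :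
    (sylMatrix d a b).mulVec (fun j : Fin (d + d) => X ^ (d + d - 1 - (j : ℕ)) * Y ^ (j : ℕ)) i
      = if (i : ℕ) < d then X ^ (d - 1 - (i : ℕ)) * Y ^ (i : ℕ) * hEval d a X Y
        else X ^ (d + d - 1 - (i : ℕ)) * Y ^ ((i : ℕ) - d) * hEval d b X Y := by
  have hilt : (i : ℕ) < d + d := i.isLt
  simp only [Matrix.mulVec, dotProduct, sylMatrix, Matrix.of_apply]
  rw [Fin.sum_univ_eq_sum_range (fun j : ℕ =>
    (if (i : ℕ) < d then
      (if (i : ℕ) ≤ j ∧ j ≤ (i : ℕ) + d then a (d + (i : ℕ) - j) else 0)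
    else
      (if (i : ℕ) - d ≤ j ∧ j ≤ (i : ℕ) then b ((i : ℕ) - j) else 0))
      * (X ^ (d + d - 1 - j) * Y ^ j)) (d + d)]
  by_cases hi : (i : ℕ) < d
  · simp only [if_pos hi, ite_mul, zero_mul]
    have step1 : ∀ j ∈ Finset.range (d + d),
        (if (i : ℕ) ≤ j ∧ j ≤ (i : ℕ) + d then a (d + (i : ℕ) - j) * (X ^ (d + d - 1 - j) * Y ^ j) else 0)
        = (if j ∈ Finset.Icc (i : ℕ) ((i : ℕ) + d) then a (d + (i : ℕ) - j) * (X ^ (d + d - 1 - j) * Y ^ j) else 0) := by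
      intro j _
      simp [Finset.mem_Icc]
    rw [Finset.sum_congr rfl step1, Finset.sum_ite_mem,
      Finset.inter_eq_right.mpr (by
        intro j hj
        rw [Finset.mem_Icc] at hj
        rw [Finset.mem_range]
        omega),
      ← Finset.Ico_add_one_right_eq_Icc, Finset.sum_Ico_eq_sum_range,
      show (i : ℕ) + d + 1 - (i : ℕ) = d + 1 by omega]
    rw [hEval, Finset.mul_sum, ← Finset.sum_range_reflect]
    refine Finset.sum_congr rfl fun m hm => ?_
    rw [Finset.mem_range] at hm
    rw [show d + (i : ℕ) - ((i : ℕ) + (d + 1 - 1 - m)) = m by omega,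
      show d + d - 1 - ((i : ℕ) + (d + 1 - 1 - m)) = (d - 1 - (i : ℕ)) + m by omega,
      show (i : ℕ) + (d + 1 - 1 - m) = (i : ℕ) + (d - m) by omega,
      pow_add, pow_add]
    ring
  · simp only [if_neg hi, ite_mul, zero_mul]
    have step1 : ∀ j ∈ Finset.range (d + d),
        (if (i : ℕ) - d ≤ j ∧ j ≤ (i : ℕ) then b ((i : ℕ) - j) * (X ^ (d + d - 1 - j) * Y ^ j) else 0)
        = (if j ∈ Finset.Icc ((i : ℕ) - d) (i : ℕ) then b ((i : ℕ) - j) * (X ^ (d + d - 1 - j) * Y ^ j) else 0) := by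
      intro j _
      simp [Finset.mem_Icc]
    rw [Finset.sum_congr rfl step1, Finset.sum_ite_mem,
      Finset.inter_eq_right.mpr (by
        intro j hj
        rw [Finset.mem_Icc] at hj
        rw [Finset.mem_range]
        omega),
      ← Finset.Ico_add_one_right_eq_Icc, Finset.sum_Ico_eq_sum_range,
      show (i : ℕ) + 1 - ((i : ℕ) - d) = d + 1 by omega]
    rw [hEval, Finset.mul_sum, ← Finset.sum_range_reflect]
    refine Finset.sum_congr rfl fun m hm => ?_
    rw [Finset.mem_range] at hm
    rw [show (i : ℕ) - ((i : ℕ) - d + (d + 1 - 1 - m)) = m by omega,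
      show d + d - 1 - ((i : ℕ) - d + (d + 1 - 1 - m)) = (d + d - 1 - (i : ℕ)) + m by omega,
      show (i : ℕ) - d + (d + 1 - 1 - m) = ((i : ℕ) - d) + (d - m) by omega,
      pow_add, pow_add]
    ring

lemma sylvester_identity (d : ℕ) (hd : 0 < d) (a b : ℕ → R) (X Y : R) :
    ∃ A B A' B' : R,
      A * hEval d a X Y + B * hEval d b X Y = (sylMatrix d a b).det * X ^ (d + d - 1) ∧
      A' * hEval d a X Y + B' * hEval d b X Y = (sylMatrix d a b).det * Y ^ (d + d - 1) := by
  classical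
  set M := sylMatrix d a b with hM
  set u : Fin (d + d) → R := fun j => X ^ (d + d - 1 - (j : ℕ)) * Y ^ (j : ℕ) with hu
  have hN : 0 < d + d := by omega
  have key : ∀ j0 : Fin (d + d),
      ∃ A B : R, A * hEval d a X Y + B * hEval d b X Y = M.det * u j0 := by
    intro j0
    have hadj : M.adjugate.mulVec (M.mulVec u) = M.det • u := by
      rw [Matrix.mulVec_mulVec, Matrix.adjugate_mul, Matrix.smul_mulVec,
        Matrix.one_mulVec]
    refine ⟨∑ i : Fin (d + d), if (i : ℕ) < d then
        M.adjugate j0 i * (X ^ (d - 1 - (i : ℕ)) * Y ^ (i : ℕ)) else 0,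
      ∑ i : Fin (d + d), if (i : ℕ) < d then 0 else
        M.adjugate j0 i * (X ^ (d + d - 1 - (i : ℕ)) * Y ^ ((i : ℕ) - d)), ?_⟩
    have lhs_eq : (∑ i : Fin (d + d), if (i : ℕ) < d then
          M.adjugate j0 i * (X ^ (d - 1 - (i : ℕ)) * Y ^ (i : ℕ)) else 0) * hEval d a X Y
        + (∑ i : Fin (d + d), if (i : ℕ) < d then 0 else
          M.adjugate j0 i * (X ^ (d + d - 1 - (i : ℕ)) * Y ^ ((i : ℕ) - d))) * hEval d b X Y
        = ∑ i : Fin (d + d), M.adjugate j0 i * (M.mulVec u i) := by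
      rw [Finset.sum_mul, Finset.sum_mul, ← Finset.sum_add_distrib]
      refine Finset.sum_congr rfl fun i _ => ?_
      rw [show M.mulVec u i = _ from sylMatrix_mulVec d a b X Y i]
      split_ifs with h <;> ring
    rw [lhs_eq]
    have := congrFun hadj j0
    simp only [Matrix.mulVec, dotProduct, Pi.smul_apply, smul_eq_mul] at this
    exact this
  obtain ⟨A0, B0, h0⟩ := key ⟨0, hN⟩
  obtain ⟨A1, B1, h1⟩ := key ⟨d + d - 1, by omega⟩
  refine ⟨A0, B0, A1, B1, ?_, ?_⟩
  · rw [h0]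
    simp only [hu]
    norm_num
  · rw [h1]
    simp only [hu]
    rw [Nat.sub_self, pow_zero, one_mul]

end Sylvester
noncomputable section NormCoord
open scoped Classical

variable {k : Type*} [Field k]

/-- `x` is a unit at `p`. -/
def IsVUnit (p : Place k) (x : RatFunc k) : Prop := x ≠ 0 ∧ placeVal p x = 0

/-- `(u1, u2)` is a normalized pair of homogeneous coordinates for the point `Q`. -/
def IsNormCoord (p : Place k) (u1 u2 : RatFunc k) (Q : Option (RatFunc k)) : Prop :=
  u1 ∈ ORing p ∧ u2 ∈ ORing p ∧ (IsVUnit p u1 ∨ IsVUnit p u2) ∧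
    Q = (if u2 = 0 then none else some (u1 / u2))

lemma exists_normCoord (p : Place k) (Q : Option (RatFunc k)) :
    ∃ u1 u2, IsNormCoord p u1 u2 Q := by
  cases Q with
  | none =>
      exact ⟨1, 0, Subring.one_mem _, Subring.zero_mem _,
        Or.inl ⟨one_ne_zero, placeVal_one p⟩, by simp⟩
  | some x =>
      by_cases hx : 0 ≤ placeVal p x
      · exact ⟨x, 1, Or.inr hx, Subring.one_mem _,
          Or.inr ⟨one_ne_zero, placeVal_one p⟩, by simp⟩
      · have hx0 : x ≠ 0 := by
          intro h; rw [h, placeVal_zero] at hx; omega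
        refine ⟨1, x⁻¹, Subring.one_mem _,
          Or.inr (by rw [placeVal_inv p hx0]; omega),
          Or.inl ⟨one_ne_zero, placeVal_one p⟩, ?_⟩
        rw [if_neg (inv_ne_zero hx0), one_div, inv_inv]

lemma normCoord_scale {p : Place k} {u1 u2 : RatFunc k} {Q : Option (RatFunc k)}
    (h : IsNormCoord p u1 u2 Q) :
    ∃ μ : RatFunc k, μ ≠ 0 ∧ (coords Q).1 = μ * u1 ∧ (coords Q).2 = μ * u2 ∧
      placeVal p μ = min (placeVal p (coords Q).1) (placeVal p (coords Q).2) := by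
  obtain ⟨hm1, hm2, hunit, hrepr⟩ := h
  by_cases hu2 : u2 = 0
  · have hU : IsVUnit p u1 := by
      rcases hunit with h | h
      · exact h
      · exact absurd rfl (hu2 ▸ h.1)
    subst hu2
    rw [hrepr, if_pos rfl]
    refine ⟨u1⁻¹, inv_ne_zero hU.1, ?_, ?_, ?_⟩
    · show (1 : RatFunc k) = u1⁻¹ * u1
      rw [inv_mul_cancel₀ hU.1]
    · show (0 : RatFunc k) = u1⁻¹ * 0
      rw [mul_zero]
    · show placeVal p u1⁻¹ = min (placeVal p 1) (placeVal p 0)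
      rw [placeVal_inv p hU.1, hU.2, placeVal_one, placeVal_zero]
      simp
  · rw [hrepr, if_neg hu2]
    refine ⟨u2⁻¹, inv_ne_zero hu2, ?_, ?_, ?_⟩
    · show u1 / u2 = u2⁻¹ * u1
      rw [div_eq_mul_inv, mul_comm]
    · show (1 : RatFunc k) = u2⁻¹ * u2
      rw [inv_mul_cancel₀ hu2]
    · show placeVal p u2⁻¹ = min (placeVal p (u1 / u2)) (placeVal p 1)
      rw [placeVal_inv p hu2, placeVal_one]
      have hv2 : 0 ≤ placeVal p u2 := by
        rcases hm2 with h | h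
        · exact absurd h hu2
        · exact h
      by_cases hu1 : u1 = 0
      · have hU : IsVUnit p u2 := by
          rcases hunit with h | h
          · exact absurd rfl (hu1 ▸ h.1)
          · exact h
        rw [hu1, zero_div, placeVal_zero, hU.2]
        simp
      · have hv1 : 0 ≤ placeVal p u1 := by
          rcases hm1 with h | h
          · exact absurd h hu1
          · exact h
        have hdiv : placeVal p (u1 / u2) = placeVal p u1 - placeVal p u2 := by
          rw [div_eq_mul_inv, placeVal_mul p hu1 (inv_ne_zero hu2), placeVal_inv p hu2]
          ring
        have hminz : placeVal p u1 = 0 ∨ placeVal p u2 = 0 := by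
          rcases hunit with h | h
          · exact Or.inl h.2
          · exact Or.inr h.2
        rw [hdiv]
        omega

lemma logDist_eq_normCoord {p : Place k} {u1 u2 w1 w2 : RatFunc k}
    {Q Q' : Option (RatFunc k)}
    (h : IsNormCoord p u1 u2 Q) (h' : IsNormCoord p w1 w2 Q') :
    logDist p Q Q' = placeValT p (u1 * w2 - u2 * w1) := by
  obtain ⟨μ, hμ0, e1, e2, hμ⟩ := normCoord_scale h
  obtain ⟨ν, hν0, e1', e2', hν⟩ := normCoord_scale h'
  rw [logDist, ← hμ, ← hν, e1, e2, e1', e2']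
  rw [show μ * u1 * (ν * w2) - ν * w1 * (μ * u2) = (μ * ν) * (u1 * w2 - u2 * w1) by ring]
  rw [placeValT_mul]
  have hc : placeValT p (μ * ν) = ((placeVal p μ + placeVal p ν : ℤ) : WithTop ℤ) := by
    rw [placeValT, if_neg (mul_ne_zero hμ0 hν0), placeVal_mul p hμ0 hν0]
  rw [hc]
  set z := placeValT p (u1 * w2 - u2 * w1)
  rw [show (-placeVal p μ - placeVal p ν : ℤ) = -(placeVal p μ + placeVal p ν) by ring]
  set a : ℤ := placeVal p μ + placeVal p ν
  rw [add_comm ((a : WithTop ℤ)) z, add_assoc, ← WithTop.coe_add]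
  simp

end NormCoord
noncomputable section Image
open scoped Classical

lemma mapHEval {R S : Type*} [CommRing R] [CommRing S] (φ : R →+* S) (d : ℕ)
    (c : ℕ → R) (X Y : R) :
    φ (hEval d c X Y) = hEval d (fun m => φ (c m)) (φ X) (φ Y) := by
  rw [hEval, hEval, map_sum]
  refine Finset.sum_congr rfl fun m _ => ?_
  rw [map_mul, map_mul, map_pow, map_pow]

lemma mapSylMatrix {R S : Type*} [CommRing R] [CommRing S] (φ : R →+* S) (d : ℕ)
    (a b : ℕ → R) :
    (sylMatrix d a b).map φ = sylMatrix d (fun m => φ (a m)) (fun m => φ (b m)) := by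
  ext i j
  simp only [sylMatrix, Matrix.map_apply, Matrix.of_apply, apply_ite φ, map_zero]

variable {k : Type*} [Field k]

lemma hResultant_eq_sylDet (d : ℕ) (f g : Polynomial (RatFunc k)) :
    hResultant d f g = (sylMatrix d f.coeff g.coeff).det := rfl

lemma placeValT_nonneg {p : Place k} {x : RatFunc k} (hx : x ∈ ORing p) :
    0 ≤ placeValT p x := by
  rcases hx with rfl | hx
  · rw [placeValT, if_pos rfl]; exact le_top
  by_cases h0 : x = 0
  · rw [placeValT, if_pos h0]; exact le_top
  rw [placeValT, if_neg h0]
  exact_mod_cast hx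

lemma isVUnit_or_inMax {p : Place k} {x : RatFunc k} (hx : x ∈ ORing p) :
    IsVUnit p x ∨ InMax p x := by
  rcases hx with rfl | hx
  · exact Or.inr (Or.inl rfl)
  by_cases h0 : x = 0
  · exact Or.inr (Or.inl h0)
  by_cases h1 : placeVal p x = 0
  · exact Or.inl ⟨h0, h1⟩
  · exact Or.inr (Or.inr (by omega))

lemma isVUnit_not_inMax {p : Place k} {x : RatFunc k} (hx : IsVUnit p x) : ¬ InMax p x := by
  rintro (h | h)
  · exact hx.1 h
  · rw [hx.2] at h
    omega

lemma hEval_zero_right {F : Type*} [Field F] (d : ℕ) (a : ℕ → F) (X : F) :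
    hEval d a X 0 = a d * X ^ d := by
  rw [hEval, Finset.sum_eq_single d]
  · rw [Nat.sub_self, pow_zero, mul_one]
  · intro m hm hmd
    rw [Finset.mem_range] at hm
    rw [zero_pow (by omega : d - m ≠ 0), mul_zero]
  · intro h
    exact absurd (Finset.self_mem_range_succ d) h

lemma hEval_eq_pow_mul_eval {d : ℕ} {f : Polynomial (RatFunc k)} (hfd : f.natDegree ≤ d)
    {u1 u2 : RatFunc k} (hu2 : u2 ≠ 0) :
    hEval d f.coeff u1 u2 = u2 ^ d * Polynomial.eval (u1 / u2) f := by
  rw [Polynomial.eval_eq_sum_range' (lt_of_le_of_lt hfd (Nat.lt_succ_self d)),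
    Finset.mul_sum, hEval]
  refine Finset.sum_congr rfl fun m hm => ?_
  rw [Finset.mem_range] at hm
  have hpow : u2 ^ (d - m) * u2 ^ m = u2 ^ d := by
    rw [← pow_add]
    congr 1
    omega
  rw [div_pow, ← hpow]
  field_simp

lemma normCoord_image {p : Place k} {f g : Polynomial (RatFunc k)} {d : ℕ} (hd : 0 < d)
    (hf : ∀ n, f.coeff n ∈ ORing p) (hg : ∀ n, g.coeff n ∈ ORing p)
    (hfd : f.natDegree ≤ d) (hgd : g.natDegree ≤ d)
    (hres0 : hResultant d f g ≠ 0) (hresv : placeVal p (hResultant d f g) = 0)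
    {u1 u2 : RatFunc k} {Q : Option (RatFunc k)} (h : IsNormCoord p u1 u2 Q) :
    IsNormCoord p (hEval d f.coeff u1 u2) (hEval d g.coeff u1 u2) (ratApply f g d Q) := by
  obtain ⟨hm1, hm2, hunit, hrepr⟩ := h
  set O := ORing p
  set φ : ↥O →+* RatFunc k := O.subtype with hφ
  set aO : ℕ → ↥O := fun m => ⟨f.coeff m, hf m⟩ with haO
  set bO : ℕ → ↥O := fun m => ⟨g.coeff m, hg m⟩ with hbO
  set XO : ↥O := ⟨u1, hm1⟩ with hXO
  set YO : ↥O := ⟨u2, hm2⟩ with hYO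
  have hFm : hEval d f.coeff u1 u2 ∈ O := by
    have := (hEval d aO XO YO).2
    rwa [show ((hEval d aO XO YO : ↥O) : RatFunc k) = hEval d f.coeff u1 u2 from by
      rw [show ((hEval d aO XO YO : ↥O) : RatFunc k) = φ (hEval d aO XO YO) from rfl,
        mapHEval]; rfl] at this
  have hGm : hEval d g.coeff u1 u2 ∈ O := by
    have := (hEval d bO XO YO).2
    rwa [show ((hEval d bO XO YO : ↥O) : RatFunc k) = hEval d g.coeff u1 u2 from by
      rw [show ((hEval d bO XO YO : ↥O) : RatFunc k) = φ (hEval d bO XO YO) from rfl,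
        mapHEval]; rfl] at this
  have hdet : φ ((sylMatrix d aO bO).det) = hResultant d f g := by
    rw [RingHom.map_det, hResultant_eq_sylDet, RingHom.mapMatrix_apply, mapSylMatrix]
    rfl
  refine ⟨hFm, hGm, ?_, ?_⟩
  · -- the unit condition, via the Sylvester identity
    obtain ⟨A, B, A', B', e1, e2⟩ := sylvester_identity d hd aO bO XO YO
    have e1' := congrArg φ e1
    have e2' := congrArg φ e2
    rw [map_add, map_mul, map_mul, mapHEval, mapHEval, map_mul, map_pow, hdet] at e1' e2'
    by_contra hcon
    push_neg at hcon
    obtain ⟨hcF, hcG⟩ := hcon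
    have hFM : InMax p (hEval d f.coeff u1 u2) := (isVUnit_or_inMax hFm).resolve_left hcF
    have hGM : InMax p (hEval d g.coeff u1 u2) := (isVUnit_or_inMax hGm).resolve_left hcG
    have hmem1 : InMax p (hResultant d f g * (φ XO) ^ (d + d - 1)) := by
      rw [← e1']
      exact InMax.add (InMax.o_mul A.2 hFM) (InMax.o_mul B.2 hGM)
    have hmem2 : InMax p (hResultant d f g * (φ YO) ^ (d + d - 1)) := by
      rw [← e2']
      exact InMax.add (InMax.o_mul A'.2 hFM) (InMax.o_mul B'.2 hGM)
    have hXc : φ XO = u1 := rfl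
    have hYc : φ YO = u2 := rfl
    rcases hunit with hU | hU
    · refine isVUnit_not_inMax ?_ (hXc ▸ hmem1)
      refine ⟨mul_ne_zero hres0 (pow_ne_zero _ hU.1), ?_⟩
      rw [placeVal_mul p hres0 (pow_ne_zero _ hU.1), hresv, placeVal_pow p hU.1, hU.2]
      ring
    · refine isVUnit_not_inMax ?_ (hYc ▸ hmem2)
      refine ⟨mul_ne_zero hres0 (pow_ne_zero _ hU.1), ?_⟩
      rw [placeVal_mul p hres0 (pow_ne_zero _ hU.1), hresv, placeVal_pow p hU.1, hU.2]
      ring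
  · -- representation
    by_cases hu2 : u2 = 0
    · subst hu2
      rw [hrepr, if_pos rfl]
      have hu1 : u1 ≠ 0 := by
        rcases hunit with hU | hU
        · exact hU.1
        · exact absurd rfl hU.1
      rw [hEval_zero_right, hEval_zero_right]
      show ratApply f g d none = _
      rw [ratApply]
      by_cases hgc : g.coeff d = 0
      · rw [if_pos hgc, if_pos (by rw [hgc, zero_mul])]
      · rw [if_neg hgc, if_neg (mul_ne_zero hgc (pow_ne_zero d hu1)),
          mul_div_mul_right _ _ (pow_ne_zero d hu1)]
    · rw [hrepr, if_neg hu2]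
      rw [hEval_eq_pow_mul_eval hfd hu2, hEval_eq_pow_mul_eval hgd hu2]
      show ratApply f g d (some (u1 / u2)) = _
      rw [ratApply]
      by_cases hge : Polynomial.eval (u1 / u2) g = 0
      · rw [if_pos hge, if_pos (by rw [hge, mul_zero])]
      · rw [if_neg hge, if_neg (mul_ne_zero (pow_ne_zero d hu2) hge),
          mul_div_mul_left _ _ (pow_ne_zero d hu2)]

end Image
noncomputable section MainLemmas
open scoped Classical

variable {k : Type*} [Field k]

lemma mem_ORing_of_placeValT {p : Place k} {x : RatFunc k} (h : 0 ≤ placeValT p x) :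
    x ∈ ORing p := by
  by_cases h0 : x = 0
  · exact Or.inl h0
  rw [placeValT, if_neg h0] at h
  exact Or.inr (by exact_mod_cast h)

lemma logDist_self (p : Place k) (C : Option (RatFunc k)) : logDist p C C = ⊤ := by
  rw [logDist, sub_self, placeValT, if_pos rfl, top_add]

lemma ratApply_const {f g : Polynomial (RatFunc k)} (hfd : f.natDegree ≤ 0)
    (hgd : g.natDegree ≤ 0) (A B : Option (RatFunc k)) :
    ratApply f g 0 A = ratApply f g 0 B := by
  have hf : ∀ x : RatFunc k, Polynomial.eval x f = f.coeff 0 := by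
    intro x
    conv_lhs => rw [Polynomial.eq_C_of_natDegree_le_zero hfd]
    rw [Polynomial.eval_C]
  have hg : ∀ x : RatFunc k, Polynomial.eval x g = g.coeff 0 := by
    intro x
    conv_lhs => rw [Polynomial.eq_C_of_natDegree_le_zero hgd]
    rw [Polynomial.eval_C]
  have key : ∀ C : Option (RatFunc k), ratApply f g 0 C
      = (if g.coeff 0 = 0 then none else some (f.coeff 0 / g.coeff 0)) := by
    intro C
    cases C with
    | none => rw [ratApply]
    | some x => rw [ratApply, hf, hg]
  rw [key A, key B]

lemma ratApply_C_mul (c : RatFunc k) (hc : c ≠ 0) (f g : Polynomial (RatFunc k)) (d : ℕ) :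
    ratApply (Polynomial.C c * f) (Polynomial.C c * g) d = ratApply f g d := by
  funext A
  cases A with
  | none =>
      rw [ratApply, ratApply, Polynomial.coeff_C_mul, Polynomial.coeff_C_mul]
      by_cases h : g.coeff d = 0
      · rw [if_pos h, if_pos (by rw [h, mul_zero])]
      · rw [if_neg h, if_neg (mul_ne_zero hc h), mul_div_mul_left _ _ hc]
  | some x =>
      rw [ratApply, ratApply, Polynomial.eval_mul, Polynomial.eval_mul, Polynomial.eval_C]
      by_cases h : Polynomial.eval x g = 0
      · rw [if_pos h, if_pos (by rw [h, mul_zero])]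
      · rw [if_neg h, if_neg (mul_ne_zero hc h), mul_div_mul_left _ _ hc]

lemma logDist_le_image {p : Place k} {f g : Polynomial (RatFunc k)} {d : ℕ} (hd : 0 < d)
    (hf : ∀ n, f.coeff n ∈ ORing p) (hg : ∀ n, g.coeff n ∈ ORing p)
    (hfd : f.natDegree ≤ d) (hgd : g.natDegree ≤ d)
    (hres0 : hResultant d f g ≠ 0) (hresv : placeVal p (hResultant d f g) = 0)
    (A B : Option (RatFunc k)) :
    logDist p A B ≤ logDist p (ratApply f g d A) (ratApply f g d B) := by
  obtain ⟨a1, a2, ha⟩ := exists_normCoord p A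
  obtain ⟨b1, b2, hb⟩ := exists_normCoord p B
  have hA' := normCoord_image hd hf hg hfd hgd hres0 hresv ha
  have hB' := normCoord_image hd hf hg hfd hgd hres0 hresv hb
  rw [logDist_eq_normCoord ha hb, logDist_eq_normCoord hA' hB']
  set O := ORing p with hO
  obtain ⟨H, hH⟩ := hEval_dvd (R := ↥O) d (fun m => ⟨f.coeff m, hf m⟩)
    (fun m => ⟨g.coeff m, hg m⟩) ⟨a1, ha.1⟩ ⟨a2, ha.2.1⟩ ⟨b1, hb.1⟩ ⟨b2, hb.2.1⟩
  have hK := congrArg (O.subtype) hH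
  rw [map_sub, map_mul, map_mul, mapHEval, mapHEval, mapHEval, mapHEval, map_mul,
    map_sub, map_mul, map_mul] at hK
  have hK' : hEval d f.coeff a1 a2 * hEval d g.coeff b1 b2
      - hEval d g.coeff a1 a2 * hEval d f.coeff b1 b2
      = (a1 * b2 - a2 * b1) * (H : RatFunc k) := by
    rw [show hEval d f.coeff a1 a2 * hEval d g.coeff b1 b2
        - hEval d g.coeff a1 a2 * hEval d f.coeff b1 b2
      = hEval d f.coeff a1 a2 * hEval d g.coeff b1 b2
        - hEval d f.coeff b1 b2 * hEval d g.coeff a1 a2 by ring,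
      show (a1 * b2 - a2 * b1) = (a1 * b2 - b1 * a2) by ring]
    exact hK
  rw [hK', placeValT_mul]
  exact le_add_of_nonneg_right (placeValT_nonneg H.2)

end MainLemmas

theorem logDist_periodic_shift {k : Type*} [Field k] [IsAlgClosed k] [CharZero k]
    (S : Finset (Place k)) (s : ℕ) (hS : S.Nonempty) (hcard : S.card = s)
    (d : ℕ) (f g : Polynomial (RatFunc k)) (hfg : IsCoprime f g)
    (hdeg : max f.natDegree g.natDegree = d)
    (hgood : HasSimpleGoodReductionOutside S f g d)
    (P : Option (RatFunc k)) (n : ℕ) (hn : 0 < n)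
    (hper : (ratApply f g d)^[n] P = P)
    (hmin : ∀ e, 0 < e → e < n → (ratApply f g d)^[e] P ≠ P) :
    ∀ p ∉ S, ∀ i j m : ℕ,
      logDist p ((ratApply f g d)^[i] P) ((ratApply f g d)^[j] P) =
        logDist p ((ratApply f g d)^[i + m] P) ((ratApply f g d)^[j + m] P) := by
  intro p hp i j m
  obtain ⟨c, hc, ⟨hfint, hgint, -⟩, hres⟩ := hgood
  set f' := Polynomial.C c * f with hf'
  set g' := Polynomial.C c * g with hg'
  have hφeq : ratApply f g d = ratApply f' g' d := (ratApply_C_mul c hc f g d).symm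
  have hfmem : ∀ nn, f'.coeff nn ∈ ORing p := fun nn =>
    mem_ORing_of_placeValT (hfint nn p hp)
  have hgmem : ∀ nn, g'.coeff nn ∈ ORing p := fun nn =>
    mem_ORing_of_placeValT (hgint nn p hp)
  have hresT : placeValT p (hResultant d f' g') = 0 := hres p hp
  have hres0 : hResultant d f' g' ≠ 0 := by
    intro h0
    rw [placeValT, if_pos h0] at hresT
    exact (by simp : (⊤ : WithTop ℤ) ≠ 0) hresT
  have hresv : placeVal p (hResultant d f' g') = 0 := by
    rw [placeValT, if_neg hres0] at hresT
    exact_mod_cast hresT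
  have hfd : f'.natDegree ≤ d := le_trans (Polynomial.natDegree_C_mul_le c f)
    (le_trans (le_max_left _ _) (le_of_eq hdeg))
  have hgd : g'.natDegree ≤ d := le_trans (Polynomial.natDegree_C_mul_le c g)
    (le_trans (le_max_right _ _) (le_of_eq hdeg))
  have MONO : ∀ A B : Option (RatFunc k),
      logDist p A B ≤ logDist p (ratApply f g d A) (ratApply f g d B) := by
    intro A B
    rw [hφeq]
    by_cases hd0 : d = 0
    · subst hd0
      rw [ratApply_const hfd hgd A B, logDist_self]
      exact le_top
    · exact logDist_le_image (Nat.pos_of_ne_zero hd0) hfmem hgmem hfd hgd hres0 hresv A B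
  have ITER : ∀ (t ii jj : ℕ),
      logDist p ((ratApply f g d)^[ii] P) ((ratApply f g d)^[jj] P) ≤
        logDist p ((ratApply f g d)^[ii + t] P) ((ratApply f g d)^[jj + t] P) := by
    intro t
    induction t with
    | zero => intro ii jj; simp
    | succ t ih =>
        intro ii jj
        refine le_trans (ih ii jj) ?_
        rw [show ii + (t + 1) = (ii + t) + 1 from by omega,
          show jj + (t + 1) = (jj + t) + 1 from by omega,
          Function.iterate_succ_apply', Function.iterate_succ_apply']
        exact MONO _ _
  have PER : ∀ (a ii : ℕ), (ratApply f g d)^[ii + a * n] P = (ratApply f g d)^[ii] P := by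
    intro a
    induction a with
    | zero => intro ii; simp
    | succ t ih =>
        intro ii
        rw [show ii + (t + 1) * n = (ii + t * n) + n from by ring,
          Function.iterate_add_apply, hper, ih ii]
  refine le_antisymm (ITER m i j) ?_
  have hmn : m ≤ m * n := Nat.le_mul_of_pos_right m hn
  have h2 := ITER (m * n - m) (i + m) (j + m)
  rw [show i + m + (m * n - m) = i + m * n from by omega,
    show j + m + (m * n - m) = j + m * n from by omega,
    PER m i, PER m j] at h2
  exact h2
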